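/- arXiv:2505.15652 — 2 statements merged into one kernel-verified Lean document; each statement's English description precedes it below -/
import Mathlib

section
/- For every vertex v of G and every i ∈ {1,…,k}, the probability that v belongs to the independent set 𝓘 produced by the two-round algorithm satisfies Pr[v ∈ 𝓘] ≥ (log* Δ)/(10⁴ · Δ). -/
open MeasureTheory Real
open scoped ENNReal

/-- `log* x`: the least `n` such that the `n`-fold iterated natural logarithm of `x` is `≤ 1`. -/
noncomputable def logStar (x : ℝ) : ℕ := sInf {n : ℕ | Real.log^[n] x ≤ 1}

/-- Auxiliary sequence: `aRec 0 = 5`, `aRec (n+1) = exp (aRec n - 3)`. -/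
noncomputable def aRec : ℕ → ℝ
  | 0 => 5
  | n + 1 => Real.exp (aRec n - 3)

/-- Paper-indexed sequence `a_i`: `aP 1 = 5` and `aP (i+1) = exp (aP i - 3)` for `i ≥ 1`. -/
noncomputable def aP (i : ℕ) : ℝ := aRec (i - 1)

/-- `b_i = a_i / Δ`. -/
noncomputable def bP (Δ i : ℕ) : ℝ := aP i / Δ

/-- `k = ⌊(log* Δ) / 10⌋`. -/
noncomputable def kP (Δ : ℕ) : ℕ := logStar Δ / 10

/-- `v ∈ C`: `r v ∈ I_i = (b_i, b_{i+1}]` for some `i ∈ {1,…,k}` and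
`r u ∈ J_i = (b_i, 1]` for every neighbor `u` of `v`. -/
def isCand {V : Type*} (G : SimpleGraph V) (Δ : ℕ) (r : V → ℝ) (v : V) : Prop :=
  ∃ i ∈ Finset.Icc 1 (kP Δ), r v ∈ Set.Ioc (bP Δ i) (bP Δ (i + 1)) ∧
    ∀ u, G.Adj v u → r u ∈ Set.Ioc (bP Δ i) 1

/-- `v ∈ C_i`: `v` is a candidate with rank in `I_i`. -/
def isCandAt {V : Type*} (G : SimpleGraph V) (Δ : ℕ) (r : V → ℝ) (i : ℕ) (v : V) : Prop :=
  isCand G Δ r v ∧ r v ∈ Set.Ioc (bP Δ i) (bP Δ (i + 1))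

/-- `v ∈ 𝓘`: `v` is a candidate and no neighbor of `v` is a candidate. -/
def inIS {V : Type*} (G : SimpleGraph V) (Δ : ℕ) (r : V → ℝ) (v : V) : Prop :=
  isCand G Δ r v ∧ ∀ u, G.Adj v u → ¬ isCand G Δ r u

/-- The ranks are independent and uniform on `[0,1]`: product Lebesgue measure on `[0,1]^V`. -/
noncomputable def rankMeasure (V : Type*) [Fintype V] : Measure (V → ℝ) :=
  Measure.pi fun _ => (volume : Measure ℝ).restrict (Set.Icc 0 1)

section Aux

set_option maxHeartbeats 1000000

noncomputable def Tow : ℕ → ℝ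
  | 0 => 1
  | n + 1 => Real.exp (Tow n)

lemma one_le_Tow : ∀ n, 1 ≤ Tow n
  | 0 => le_refl 1
  | n + 1 => by
      have := one_le_Tow n
      have h := Real.add_one_le_exp (Tow n)
      simp only [Tow]; linarith

lemma Tow_lt_succ (n : ℕ) : Tow n < Tow (n + 1) := by
  have h := Real.add_one_le_exp (Tow n)
  simp only [Tow]; linarith

lemma Tow_mono : Monotone Tow :=
  monotone_nat_of_le_succ fun n => (Tow_lt_succ n).le

lemma Tow_lt_of_iter : ∀ (n : ℕ) (x : ℝ), 0 < x → (∀ j ≤ n, 1 < Real.log^[j] x) →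
    Tow n < x
  | 0, x, _, h => by simpa [Tow] using h 0 le_rfl
  | n + 1, x, hx, h => by
      have hlog : 0 < Real.log x := by
        have h1 := h 1 (by omega)
        simp only [Function.iterate_one] at h1
        linarith
      have ih := Tow_lt_of_iter n (Real.log x) hlog (fun j hj => by
        have := h (j + 1) (by omega)
        rwa [Function.iterate_succ_apply] at this)
      have : Real.exp (Tow n) < Real.exp (Real.log x) := Real.exp_lt_exp.2 ih
      rw [Real.exp_log hx] at this
      simpa [Tow] using this

lemma logStar_gt {x : ℝ} {n : ℕ} (h : n < logStar x) : 1 < Real.log^[n] x := by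
  have := Nat.notMem_of_lt_sInf (s := {n : ℕ | Real.log^[n] x ≤ 1}) h
  simpa using this
lemma exp_two_ge : (7:ℝ) ≤ Real.exp 2 := by
  have h1 := Real.exp_one_gt_d9
  have h2 : Real.exp 2 = Real.exp 1 ^ 2 := by rw [← Real.exp_nat_mul]; norm_num
  nlinarith

lemma five_le_aRec : ∀ n, 5 ≤ aRec n
  | 0 => by norm_num [aRec]
  | n + 1 => by
      have h := five_le_aRec n
      have : Real.exp 2 ≤ Real.exp (aRec n - 3) := Real.exp_le_exp.2 (by linarith)
      have he := exp_two_ge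
      simp only [aRec]; linarith

lemma aRec_lt_succ (n : ℕ) : aRec n < aRec (n + 1) := by
  have h5 := five_le_aRec n
  set a := aRec n with ha
  have he := exp_two_ge
  have hsplit : Real.exp (a - 3) = Real.exp 2 * Real.exp (a - 5) := by
    rw [← Real.exp_add]; ring_nf
  have hlin : a - 4 ≤ Real.exp (a - 5) := by
    have := Real.add_one_le_exp (a - 5); linarith
  have : Real.exp 2 * (a - 4) ≤ Real.exp 2 * Real.exp (a - 5) :=
    mul_le_mul_of_nonneg_left hlin (by positivity)
  show a < Real.exp (a - 3)
  nlinarith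

lemma aRec_strictMono : StrictMono aRec := strictMono_nat_of_lt_succ aRec_lt_succ

lemma aRec_le_Tow : ∀ n, aRec n ≤ Tow (n + 2)
  | 0 => by
      have h1 : (2:ℝ) ≤ Tow 1 := by
        show (2:ℝ) ≤ Real.exp (1:ℝ)
        linarith [Real.exp_one_gt_d9]
      have h2 : Real.exp 2 ≤ Real.exp (Tow 1) := Real.exp_le_exp.2 h1
      have he := exp_two_ge
      show (5:ℝ) ≤ Real.exp (Tow 1)
      linarith
  | n + 1 => by
      have ih := aRec_le_Tow n
      have : Real.exp (aRec n - 3) ≤ Real.exp (Tow (n + 2)) :=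
        Real.exp_le_exp.2 (by linarith)
      simpa [aRec, Tow] using this

lemma quad_le_exp {t : ℝ} (ht : 0 ≤ t) : (1 + t / 2) ^ 2 ≤ Real.exp t := by
  have h1 : 1 + t / 2 ≤ Real.exp (t / 2) := by
    have := Real.add_one_le_exp (t / 2); linarith
  have h2 : (1 + t / 2) ^ 2 ≤ Real.exp (t / 2) ^ 2 :=
    pow_le_pow_left₀ (by linarith) h1 2
  have h3 : Real.exp (t / 2) ^ 2 = Real.exp t := by
    rw [sq, ← Real.exp_add]; ring_nf
  linarith

lemma Tow_sq (n : ℕ) : Tow n ^ 2 ≤ Tow (n + 2) := by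
  have h1 := one_le_Tow n
  have h2 : Tow n ≤ Real.exp (Tow n - 1) := by
    have := Real.add_one_le_exp (Tow n - 1); linarith
  have h3 : Tow n ^ 2 ≤ Real.exp (Tow n - 1) ^ 2 :=
    pow_le_pow_left₀ (by linarith) h2 2
  have h4 : Real.exp (Tow n - 1) ^ 2 = Real.exp (2 * Tow n - 2) := by
    rw [← Real.exp_nat_mul]; ring_nf
  have h5 : 2 * Tow n - 2 ≤ Real.exp (Tow n) := by
    have hsplit : Real.exp (Tow n) = Real.exp 1 * Real.exp (Tow n - 1) := by
      rw [← Real.exp_add]; ring_nf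
    have he1 := Real.exp_one_gt_d9
    nlinarith [mul_le_mul_of_nonneg_left h2 (le_of_lt (Real.exp_pos 1))]
  have h6 : Real.exp (2 * Tow n - 2) ≤ Real.exp (Real.exp (Tow n)) :=
    Real.exp_le_exp.2 h5
  calc Tow n ^ 2 ≤ Real.exp (2 * Tow n - 2) := by linarith
    _ ≤ Real.exp (Real.exp (Tow n)) := h6
    _ = Tow (n + 2) := rfl

lemma Tow_three_ge : (4000:ℝ) ≤ Tow 3 := by
  have he2 := exp_two_ge
  have he2' : (7.38:ℝ) ≤ Real.exp 2 := by
    have h1 := Real.exp_one_gt_d9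
    have h2 : Real.exp 2 = Real.exp 1 ^ 2 := by rw [← Real.exp_nat_mul]; norm_num
    nlinarith
  have h1 : (2.7:ℝ) ≤ Tow 1 := by
    show (2.7:ℝ) ≤ Real.exp 1; linarith [Real.exp_one_gt_d9]
  have h2 : (12:ℝ) ≤ Tow 2 := by
    show (12:ℝ) ≤ Real.exp (Tow 1)
    have : Real.exp (2 + 0.7) ≤ Real.exp (Tow 1) := Real.exp_le_exp.2 (by linarith)
    have hsplit : Real.exp (2 + 0.7) = Real.exp 2 * Real.exp 0.7 := Real.exp_add 2 0.7
    have h07 : (1.7:ℝ) ≤ Real.exp 0.7 := by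
      have := Real.add_one_le_exp (0.7:ℝ); linarith
    nlinarith [Real.exp_pos (0.7:ℝ)]
  show (4000:ℝ) ≤ Real.exp (Tow 2)
  have h3 : Real.exp 12 ≤ Real.exp (Tow 2) := Real.exp_le_exp.2 h2
  have h4 : Real.exp 12 = Real.exp 2 ^ 6 := by rw [← Real.exp_nat_mul]; norm_num
  have h6 : (7.38:ℝ) ^ 6 ≤ Real.exp 2 ^ 6 := pow_le_pow_left₀ (by norm_num) he2' 6
  have h7 : (4000:ℝ) ≤ (7.38:ℝ) ^ 6 := by norm_num
  linarith

lemma thousand_Tow (m : ℕ) : 1000 * Tow (m + 4) ≤ Tow (m + 6) := by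
  have h5 : (4000:ℝ) ≤ Tow (m + 5) := le_trans Tow_three_ge (Tow_mono (by omega))
  have h45 : Tow (m + 4) ≤ Tow (m + 5) := Tow_mono (by omega)
  have hq := quad_le_exp (t := Tow (m + 5)) (by linarith)
  have : Tow (m + 6) = Real.exp (Tow (m + 5)) := rfl
  nlinarith
set_option maxHeartbeats 1000000

lemma exp_two_lb : (7.38:ℝ) ≤ Real.exp 2 := by
  have h1 := Real.exp_one_gt_d9
  have h2 : Real.exp 2 = Real.exp 1 ^ 2 := by rw [← Real.exp_nat_mul]; norm_num
  nlinarith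

lemma exp_three_lb : (20:ℝ) ≤ Real.exp 3 := by
  have h1 := Real.exp_one_gt_d9
  have h2 : Real.exp 3 = Real.exp 1 ^ 3 := by rw [← Real.exp_nat_mul]; norm_num
  have h3 : (2.7182818283:ℝ) ^ 3 ≤ Real.exp 1 ^ 3 := pow_le_pow_left₀ (by norm_num) h1.le 3
  have h4 : (20:ℝ) ≤ (2.7182818283:ℝ) ^ 3 := by norm_num
  linarith

lemma exp_three_ub : Real.exp 3 ≤ (21:ℝ) := by
  have h1 := Real.exp_one_lt_d9
  have h0 := Real.exp_pos (1:ℝ)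
  have h2 : Real.exp 3 = Real.exp 1 ^ 3 := by rw [← Real.exp_nat_mul]; norm_num
  have h3 : Real.exp 1 ^ 3 ≤ (2.7182818286:ℝ) ^ 3 := pow_le_pow_left₀ h0.le h1.le 3
  have h4 : (2.7182818286:ℝ) ^ 3 ≤ (21:ℝ) := by norm_num
  linarith

lemma exp_neg_three_bounds : 1/21 ≤ Real.exp (-3) ∧ Real.exp (-3) ≤ 1/20 := by
  have h1 := exp_three_lb
  have h2 := exp_three_ub
  have hp := Real.exp_pos (3:ℝ)
  have hprod : Real.exp (-3) * Real.exp 3 = 1 := by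
    rw [← Real.exp_add]; norm_num
  have hx := Real.exp_pos (-3:ℝ)
  constructor <;> nlinarith

lemma one_sub_ge {b : ℝ} (h0 : 0 ≤ b) (h1 : b ≤ 1/100) :
    Real.exp (-(b + b ^ 2)) ≤ 1 - b := by
  have hq := quad_le_exp (t := b + b ^ 2) (by positivity)
  have hpoly : 1 ≤ (1 - b) * (1 + (b + b ^ 2) / 2) ^ 2 := by
    nlinarith [sq_nonneg b, mul_nonneg (mul_nonneg h0 h0) h0, sq_nonneg (b*b)]
  have h2 : 1 ≤ (1 - b) * Real.exp (b + b ^ 2) := by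
    have := mul_le_mul_of_nonneg_left hq (by linarith : (0:ℝ) ≤ 1 - b)
    linarith
  rw [Real.exp_neg, ← one_div, div_le_iff₀ (Real.exp_pos _)]
  linarith

lemma lt_exp_sub3 {a : ℝ} (ha : 5 ≤ a) : a < Real.exp (a - 3) := by
  have he := exp_two_lb
  have hsplit : Real.exp (a - 3) = Real.exp 2 * Real.exp (a - 5) := by
    rw [← Real.exp_add]; ring_nf
  have hlin : a - 4 ≤ Real.exp (a - 5) := by
    have := Real.add_one_le_exp (a - 5); linarith
  nlinarith [mul_le_mul_of_nonneg_left hlin (by positivity : (0:ℝ) ≤ Real.exp 2)]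
lemma keyIneq (Δ : ℕ) (hΔ1 : 1 ≤ Δ) (a a' : ℝ) (ha : 5 ≤ a)
    (ha' : a' = Real.exp (a - 3)) (hsmall : 1000 * a' ^ 2 ≤ (Δ:ℝ)) :
    1 / (100 * (Δ:ℝ)) +
      (Δ:ℝ) * (a' / (Δ:ℝ) - a / (Δ:ℝ)) ^ 2 * (1 - a / (Δ:ℝ)) ^ (2 * (Δ - 1)) ≤
    (a' / (Δ:ℝ) - a / (Δ:ℝ)) * (1 - a / (Δ:ℝ)) ^ Δ := by
  set D : ℝ := (Δ:ℝ) with hDdef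
  have hD : (0:ℝ) < D := by
    rw [hDdef]; exact_mod_cast (by omega : 0 < Δ)
  set b : ℝ := a / D with hbdef
  set b' : ℝ := a' / D with hb'def
  have ha'5 : 5 ≤ a' := by
    rw [ha']
    have : Real.exp 2 ≤ Real.exp (a - 3) := Real.exp_le_exp.2 (by linarith)
    linarith [exp_two_lb]
  have haa' : a < a' := ha' ▸ lt_exp_sub3 ha
  have hbD : b * D = a := div_mul_cancel₀ a hD.ne'
  have hb'D : b' * D = a' := div_mul_cancel₀ a' hD.ne'
  have hb0 : 0 ≤ b := by positivity
  have hbb' : b < b' := by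
    rw [hbdef, hb'def]; gcongr
  have hb'le : b' ≤ 1/5000 := by
    rw [hb'def, div_le_iff₀ hD]
    nlinarith
  have hab' : a' * b' ≤ 1/1000 := by
    rw [hb'def, mul_div_assoc']
    rw [div_le_iff₀ hD]
    nlinarith
  have hab : a * b ≤ 1/1000 := by
    have : a * b ≤ a' * b' :=
      mul_le_mul haa'.le hbb'.le hb0 (by linarith)
    linarith
  have hb100 : b ≤ 1/100 := by linarith
  -- lower bound for (1-b)^Δ
  have hlow : 999/1000 * Real.exp (-a) ≤ (1 - b) ^ Δ := by
    have step1 := one_sub_ge hb0 hb100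
    have step2 : Real.exp (-(b + b ^ 2)) ^ Δ ≤ (1 - b) ^ Δ :=
      pow_le_pow_left₀ (Real.exp_pos _).le step1 Δ
    have step3 : Real.exp (-(b + b ^ 2)) ^ Δ = Real.exp (-(a + a * b)) := by
      rw [← Real.exp_nat_mul]
      congr 1
      rw [← hbD]; ring
    have step4 : Real.exp (-(a + a * b)) = Real.exp (-(a * b)) * Real.exp (-a) := by
      rw [← Real.exp_add]; ring_nf
    have step5 : 999/1000 ≤ Real.exp (-(a * b)) := by
      have := Real.add_one_le_exp (-(a * b)); linarith
    have step6 := mul_le_mul_of_nonneg_right step5 (Real.exp_pos (-a)).le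
    rw [step3, step4] at step2
    linarith
  -- upper bound for (1-b)^(2*(Δ-1))
  have hup : (1 - b) ^ (2 * (Δ - 1)) ≤
      Real.exp (-a) * Real.exp (-a) * (1001/1000) := by
    have u1 : 1 - b ≤ Real.exp (-b) := by
      have := Real.add_one_le_exp (-b); linarith
    have u2 : (0:ℝ) ≤ 1 - b := by linarith
    have u3 : (1 - b) ^ (2 * (Δ - 1)) ≤ Real.exp (-b) ^ (2 * (Δ - 1)) :=
      pow_le_pow_left₀ u2 u1 _
    have u4 : Real.exp (-b) ^ (2 * (Δ - 1)) = Real.exp (-(2 * a) + 2 * b) := by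
      rw [← Real.exp_nat_mul]
      congr 1
      have hc : ((2 * (Δ - 1) : ℕ) : ℝ) = 2 * D - 2 := by
        push_cast [Nat.cast_sub hΔ1]; ring
      rw [hc, ← hbD]; ring
    have u6 : Real.exp (-(2 * a) + 2 * b) =
        Real.exp (-a) * Real.exp (-a) * Real.exp (2 * b) := by
      rw [← Real.exp_add, ← Real.exp_add]; ring_nf
    have u7 : Real.exp (2 * b) ≤ 1001/1000 := by
      have hy := Real.add_one_le_exp (-(2 * b))
      have hx := Real.exp_pos (2 * b)
      have hprod : Real.exp (2 * b) * Real.exp (-(2 * b)) = 1 := by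
        rw [← Real.exp_add]; simp
      nlinarith [mul_le_mul_of_nonneg_left hy hx.le]
    have u8 : Real.exp (-a) * Real.exp (-a) * Real.exp (2 * b) ≤
        Real.exp (-a) * Real.exp (-a) * (1001/1000) := by
      have := mul_le_mul_of_nonneg_left u7
        (by positivity : (0:ℝ) ≤ Real.exp (-a) * Real.exp (-a))
      linarith
    calc (1 - b) ^ (2 * (Δ - 1)) ≤ Real.exp (-b) ^ (2 * (Δ - 1)) := u3
      _ = Real.exp (-(2 * a) + 2 * b) := u4
      _ = Real.exp (-a) * Real.exp (-a) * Real.exp (2 * b) := u6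
      _ ≤ Real.exp (-a) * Real.exp (-a) * (1001/1000) := u8
  -- a ≤ 7/10 a'
  have hfrac : a ≤ 7/10 * a' := by
    have he2 := exp_two_lb
    have hsplit : a' = Real.exp 2 * Real.exp (a - 5) := by
      rw [ha', ← Real.exp_add]; ring_nf
    have hlin : a - 4 ≤ Real.exp (a - 5) := by
      have := Real.add_one_le_exp (a - 5); linarith
    have key : Real.exp 2 * (a - 4) ≤ a' := by
      rw [hsplit]
      exact mul_le_mul_of_nonneg_left hlin (by positivity)
    nlinarith [mul_nonneg (by linarith : (0:ℝ) ≤ Real.exp 2 - 7.38)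
      (by linarith : (0:ℝ) ≤ a - 4)]
  have hae : a' * Real.exp (-a) = Real.exp (-3) := by
    rw [ha', ← Real.exp_add]; ring_nf
  obtain ⟨hen3l, hen3u⟩ := exp_neg_three_bounds
  -- key quantity u = (b'-b) * exp(-a)
  have hu : 1/70 * (1/D) ≤ (b' - b) * Real.exp (-a) := by
    have hsub : b' - b = (a' - a) / D := by
      rw [hbdef, hb'def, sub_div]
    have h1 : 3/10 * a' / D ≤ b' - b := by
      rw [hsub]; gcongr; linarith
    have h2 : (3/10 * a' / D) * Real.exp (-a) ≤ (b' - b) * Real.exp (-a) :=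
      mul_le_mul_of_nonneg_right h1 (Real.exp_pos _).le
    have h3 : (3/10 * a' / D) * Real.exp (-a) = 3/10 * (a' * Real.exp (-a)) * (1/D) := by
      ring
    have h4 : 1/70 * (1/D) ≤ 3/10 * (a' * Real.exp (-a)) * (1/D) := by
      rw [hae]
      have h5 : (0:ℝ) ≤ 1/D := by positivity
      have h6 := mul_le_mul_of_nonneg_right hen3l h5
      linarith
    linarith
  -- final assembly
  have hDB : D * (b' - b) ^ 2 = (a' - a) * (b' - b) := by
    have : D * (b' - b) ^ 2 = (b' * D - b * D) * (b' - b) := by ring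
    rw [this, hbD, hb'D]
  have hterm2 : D * (b' - b) ^ 2 * (1 - b) ^ (2 * (Δ - 1)) ≤
      ((b' - b) * Real.exp (-a)) * (1001/20000) := by
    have e1 : (0:ℝ) ≤ b' - b := by linarith
    have e2 : (0:ℝ) ≤ (1 - b) ^ (2 * (Δ - 1)) := pow_nonneg (by linarith) _
    calc D * (b' - b) ^ 2 * (1 - b) ^ (2 * (Δ - 1))
        = (a' - a) * (b' - b) * (1 - b) ^ (2 * (Δ - 1)) := by rw [hDB]
      _ ≤ a' * (b' - b) * (Real.exp (-a) * Real.exp (-a) * (1001/1000)) := by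
          have g1 : (a' - a) * (b' - b) ≤ a' * (b' - b) :=
            mul_le_mul_of_nonneg_right (by linarith) e1
          exact mul_le_mul g1 hup e2 (mul_nonneg (by linarith) e1)
      _ = (a' * Real.exp (-a)) * ((b' - b) * Real.exp (-a)) * (1001/1000) := by ring
      _ = Real.exp (-3) * ((b' - b) * Real.exp (-a)) * (1001/1000) := by rw [hae]
      _ ≤ (1/20) * ((b' - b) * Real.exp (-a)) * (1001/1000) := by
          have hW : (0:ℝ) ≤ (b' - b) * Real.exp (-a) :=
            mul_nonneg e1 (Real.exp_pos _).le
          exact mul_le_mul_of_nonneg_right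
            (mul_le_mul_of_nonneg_right hen3u hW) (by norm_num)
      _ = ((b' - b) * Real.exp (-a)) * (1001/20000) := by ring
  have hterm1 : ((b' - b) * Real.exp (-a)) * (999/1000) ≤ (b' - b) * (1 - b) ^ Δ := by
    have e1 : (0:ℝ) ≤ b' - b := by linarith
    have := mul_le_mul_of_nonneg_left hlow e1
    nlinarith
  have hsplit : 1 / (100 * D) = 1/100 * (1/D) := by ring
  rw [hsplit]
  set u : ℝ := (b' - b) * Real.exp (-a) with hudef
  have ht : 0 < 1/D := by positivity
  clear_value u
  clear_value b b' D
  linarith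

variable {V : Type*} [Fintype V] [DecidableEq V]

/-- The coordinate-wise constraint set for the event `E_j`. -/
noncomputable def SEv (G : SimpleGraph V) [DecidableRel G.Adj] (Δ : ℕ) (v : V) (j : ℕ)
    (w : V) : Set ℝ :=
  if w = v then Set.Ioc (bP Δ j) (bP Δ (j + 1))
  else if w ∈ G.neighborFinset v then Set.Ioc (bP Δ j) 1
  else Set.univ

/-- The event `E_j`. -/
noncomputable def Ev (G : SimpleGraph V) [DecidableRel G.Adj] (Δ : ℕ) (v : V) (j : ℕ) :
    Set (V → ℝ) :=
  Set.pi Set.univ (SEv G Δ v j)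

/-- `K u`: the neighbors of `v` other than `u` together with neighbors of `u` other than `v`. -/
noncomputable def Kf (G : SimpleGraph V) [DecidableRel G.Adj] (v u : V) : Finset V :=
  (G.neighborFinset v \ {u}) ∪ (G.neighborFinset u \ {v})

/-- The coordinate-wise constraint set for the bad event `B_{j,u}`. -/
noncomputable def SBv (G : SimpleGraph V) [DecidableRel G.Adj] (Δ : ℕ) (v u : V) (j : ℕ)
    (w : V) : Set ℝ :=
  if w = v ∨ w = u then Set.Ioc (bP Δ j) (bP Δ (j + 1))
  else if w ∈ Kf G v u then Set.Ioc (bP Δ j) 1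
  else Set.univ

/-- The bad event `B_{j,u}`. -/
noncomputable def Bv (G : SimpleGraph V) [DecidableRel G.Adj] (Δ : ℕ) (v u : V) (j : ℕ) :
    Set (V → ℝ) :=
  Set.pi Set.univ (SBv G Δ v u j)

/-- The good event at level `j`. -/
noncomputable def Dv (G : SimpleGraph V) [DecidableRel G.Adj] (Δ : ℕ) (v : V) (j : ℕ) :
    Set (V → ℝ) :=
  Ev G Δ v j \ ⋃ u ∈ G.neighborFinset v, Bv G Δ v u j

lemma SEv_measurable (G : SimpleGraph V) [DecidableRel G.Adj] (Δ : ℕ) (v : V) (j : ℕ) (w : V) :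
    MeasurableSet (SEv G Δ v j w) := by
  unfold SEv
  split_ifs <;> first | exact measurableSet_Ioc | exact MeasurableSet.univ

lemma SBv_measurable (G : SimpleGraph V) [DecidableRel G.Adj] (Δ : ℕ) (v u : V) (j : ℕ) (w : V) :
    MeasurableSet (SBv G Δ v u j w) := by
  unfold SBv
  split_ifs <;> first | exact measurableSet_Ioc | exact MeasurableSet.univ

lemma Ev_measurable (G : SimpleGraph V) [DecidableRel G.Adj] (Δ : ℕ) (v : V) (j : ℕ) :
    MeasurableSet (Ev G Δ v j) :=
  MeasurableSet.univ_pi (SEv_measurable G Δ v j)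

lemma Bv_measurable (G : SimpleGraph V) [DecidableRel G.Adj] (Δ : ℕ) (v u : V) (j : ℕ) :
    MeasurableSet (Bv G Δ v u j) :=
  MeasurableSet.univ_pi (SBv_measurable G Δ v u j)

lemma Dv_measurable (G : SimpleGraph V) [DecidableRel G.Adj] (Δ : ℕ) (v : V) (j : ℕ) :
    MeasurableSet (Dv G Δ v j) :=
  (Ev_measurable G Δ v j).diff
    (Finset.measurableSet_biUnion _ fun u _ => Bv_measurable G Δ v u j)

/-- The reference one-dimensional measure. -/
noncomputable def mu0 : Measure ℝ := (volume : Measure ℝ).restrict (Set.Icc 0 1)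

lemma mu0_Ioc {c d : ℝ} (h0 : 0 ≤ c) (h1 : d ≤ 1) :
    mu0 (Set.Ioc c d) = ENNReal.ofReal (d - c) := by
  unfold mu0
  rw [Measure.restrict_apply measurableSet_Ioc]
  have hsub : Set.Ioc c d ∩ Set.Icc 0 1 = Set.Ioc c d :=
    Set.inter_eq_left.mpr fun x hx => ⟨le_trans h0 hx.1.le, le_trans hx.2 h1⟩
  rw [hsub, Real.volume_Ioc]

lemma mu0_univ : mu0 Set.univ = 1 := by
  unfold mu0
  rw [Measure.restrict_apply MeasurableSet.univ, Set.univ_inter, Real.volume_Icc]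
  norm_num

lemma rankMeasure_pi (S : V → Set ℝ) :
    rankMeasure V (Set.pi Set.univ S) = ∏ w, mu0 (S w) :=
  Measure.pi_pi _ S

lemma rankMeasure_pi_finset (S : V → Set ℝ) (T : Finset V)
    (hout : ∀ w ∉ T, S w = Set.univ) :
    rankMeasure V (Set.pi Set.univ S) = ∏ w ∈ T, mu0 (S w) := by
  rw [rankMeasure_pi]
  refine (Finset.prod_subset (Finset.subset_univ T) fun w _ hw => ?_).symm
  rw [hout w hw, mu0_univ]

set_option linter.unusedSectionVars false

lemma mu_Ev (G : SimpleGraph V) [DecidableRel G.Adj] {Δ : ℕ} (v : V)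
    (hreg : G.IsRegularOfDegree Δ) {j : ℕ} (hb0 : 0 ≤ bP Δ j) (hb1 : bP Δ (j + 1) ≤ 1) :
    rankMeasure V (Ev G Δ v j) =
      ENNReal.ofReal (bP Δ (j + 1) - bP Δ j) * ENNReal.ofReal (1 - bP Δ j) ^ Δ := by
  have hout : ∀ w ∉ insert v (G.neighborFinset v), SEv G Δ v j w = Set.univ := by
    intro w hw
    simp only [Finset.mem_insert, not_or] at hw
    unfold SEv
    rw [if_neg hw.1, if_neg hw.2]
  rw [Ev, rankMeasure_pi_finset _ _ hout,
    Finset.prod_insert (SimpleGraph.notMem_neighborFinset_self G v)]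
  have h1 : mu0 (SEv G Δ v j v) = ENNReal.ofReal (bP Δ (j + 1) - bP Δ j) := by
    unfold SEv
    rw [if_pos rfl, mu0_Ioc hb0 hb1]
  have h2 : ∏ w ∈ G.neighborFinset v, mu0 (SEv G Δ v j w) =
      ENNReal.ofReal (1 - bP Δ j) ^ Δ := by
    have hc : ∀ w ∈ G.neighborFinset v, mu0 (SEv G Δ v j w) =
        ENNReal.ofReal (1 - bP Δ j) := by
      intro w hw
      have hne : w ≠ v := fun h =>
        SimpleGraph.notMem_neighborFinset_self G v (h ▸ hw)
      unfold SEv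
      rw [if_neg hne, if_pos hw, mu0_Ioc hb0 le_rfl]
    rw [Finset.prod_congr rfl hc, Finset.prod_const,
      SimpleGraph.card_neighborFinset_eq_degree, hreg v]
  rw [h1, h2]

lemma Kf_card (G : SimpleGraph V) [DecidableRel G.Adj] {Δ : ℕ} {v u : V}
    (hreg : G.IsRegularOfDegree Δ) (htri : G.CliqueFree 3) (hadj : G.Adj v u) :
    (Kf G v u).card = 2 * (Δ - 1) := by
  have hdisj : Disjoint (G.neighborFinset v \ {u}) (G.neighborFinset u \ {v}) := by
    rw [Finset.disjoint_left]
    rintro w hw1 hw2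
    simp only [Finset.mem_sdiff, Finset.mem_singleton, SimpleGraph.mem_neighborFinset] at hw1 hw2
    exact htri {v, u, w}
      (SimpleGraph.is3Clique_triple_iff.mpr ⟨hadj, hw1.1, hw2.1⟩)
  have hu : u ∈ G.neighborFinset v := by rwa [SimpleGraph.mem_neighborFinset]
  have hv : v ∈ G.neighborFinset u := by
    rw [SimpleGraph.mem_neighborFinset]; exact hadj.symm
  have c1 : (G.neighborFinset v \ {u}).card = Δ - 1 := by
    rw [Finset.card_sdiff_of_subset (Finset.singleton_subset_iff.mpr hu),
      SimpleGraph.card_neighborFinset_eq_degree, hreg v, Finset.card_singleton]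
  have c2 : (G.neighborFinset u \ {v}).card = Δ - 1 := by
    rw [Finset.card_sdiff_of_subset (Finset.singleton_subset_iff.mpr hv),
      SimpleGraph.card_neighborFinset_eq_degree, hreg u, Finset.card_singleton]
  rw [Kf, Finset.card_union_of_disjoint hdisj, c1, c2]
  omega

lemma mu_Bv (G : SimpleGraph V) [DecidableRel G.Adj] {Δ : ℕ} {v u : V}
    (hreg : G.IsRegularOfDegree Δ) (htri : G.CliqueFree 3) (hadj : G.Adj v u) {j : ℕ}
    (hb0 : 0 ≤ bP Δ j) (hb1 : bP Δ (j + 1) ≤ 1) :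
    rankMeasure V (Bv G Δ v u j) =
      ENNReal.ofReal (bP Δ (j + 1) - bP Δ j) ^ 2 *
        ENNReal.ofReal (1 - bP Δ j) ^ (2 * (Δ - 1)) := by
  have hvu : v ≠ u := G.ne_of_adj hadj
  have hvK : v ∉ Kf G v u := by
    intro h
    rcases Finset.mem_union.mp h with h1 | h2
    · have h3 := (Finset.mem_sdiff.mp h1).1
      rw [SimpleGraph.mem_neighborFinset] at h3
      exact G.irrefl h3
    · exact (Finset.mem_sdiff.mp h2).2 (Finset.mem_singleton_self v)
  have huK : u ∉ Kf G v u := by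
    intro h
    rcases Finset.mem_union.mp h with h1 | h2
    · exact (Finset.mem_sdiff.mp h1).2 (Finset.mem_singleton_self u)
    · have h3 := (Finset.mem_sdiff.mp h2).1
      rw [SimpleGraph.mem_neighborFinset] at h3
      exact G.irrefl h3
  have hout : ∀ w ∉ insert v (insert u (Kf G v u)), SBv G Δ v u j w = Set.univ := by
    intro w hw
    simp only [Finset.mem_insert, not_or] at hw
    unfold SBv
    rw [if_neg (by tauto), if_neg hw.2.2]
  rw [Bv, rankMeasure_pi_finset _ _ hout]
  rw [Finset.prod_insert (by simp only [Finset.mem_insert, not_or]; exact ⟨hvu, hvK⟩),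
    Finset.prod_insert huK]
  have h1 : mu0 (SBv G Δ v u j v) = ENNReal.ofReal (bP Δ (j + 1) - bP Δ j) := by
    unfold SBv
    rw [if_pos (Or.inl rfl), mu0_Ioc hb0 hb1]
  have h2 : mu0 (SBv G Δ v u j u) = ENNReal.ofReal (bP Δ (j + 1) - bP Δ j) := by
    unfold SBv
    rw [if_pos (Or.inr rfl), mu0_Ioc hb0 hb1]
  have h3 : ∏ w ∈ Kf G v u, mu0 (SBv G Δ v u j w) =
      ENNReal.ofReal (1 - bP Δ j) ^ (2 * (Δ - 1)) := by
    have hc : ∀ w ∈ Kf G v u, mu0 (SBv G Δ v u j w) = ENNReal.ofReal (1 - bP Δ j) := by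
      intro w hw
      have hwv : w ≠ v := fun h => hvK (h ▸ hw)
      have hwu : w ≠ u := fun h => huK (h ▸ hw)
      unfold SBv
      rw [if_neg (by tauto), if_pos hw, mu0_Ioc hb0 le_rfl]
    rw [Finset.prod_congr rfl hc, Finset.prod_const, Kf_card G hreg htri hadj]
  rw [h1, h2, h3, sq, mul_assoc]

lemma bP_mono {Δ : ℕ} (hΔ : 0 < Δ) {p q : ℕ} (h : p ≤ q) : bP Δ p ≤ bP Δ q := by
  unfold bP aP
  have hD : (0:ℝ) < (Δ:ℝ) := by exact_mod_cast hΔ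
  have h2 := aRec_strictMono.monotone (Nat.sub_le_sub_right h 1)
  gcongr

lemma Ev_subset_cand (G : SimpleGraph V) [DecidableRel G.Adj] {Δ : ℕ} (v : V) {j : ℕ}
    (hj : j ∈ Finset.Icc 1 (kP Δ)) {r : V → ℝ} (hr : r ∈ Ev G Δ v j) :
    isCand G Δ r v := by
  rw [Ev, Set.mem_univ_pi] at hr
  refine ⟨j, hj, ?_, ?_⟩
  · have := hr v
    unfold SEv at this
    rwa [if_pos rfl] at this
  · intro u hu
    have hne : u ≠ v := fun h => G.irrefl (h ▸ hu)
    have hmem : u ∈ G.neighborFinset v := by rwa [SimpleGraph.mem_neighborFinset]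
    have := hr u
    unfold SEv at this
    rwa [if_neg hne, if_pos hmem] at this

lemma Ev_cand_mem_Bv (G : SimpleGraph V) [DecidableRel G.Adj] {Δ : ℕ} (hΔ : 0 < Δ) (v : V)
    {j : ℕ} {u : V} (hadj : G.Adj v u) {r : V → ℝ} (hr : r ∈ Ev G Δ v j)
    (hcand : isCand G Δ r u) : r ∈ Bv G Δ v u j := by
  obtain ⟨j', hj', hru', hnb⟩ := hcand
  rw [Ev, Set.mem_univ_pi] at hr
  have hrv : r v ∈ Set.Ioc (bP Δ j) (bP Δ (j + 1)) := by
    have := hr v; unfold SEv at this; rwa [if_pos rfl] at this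
  have hnev : u ≠ v := fun h => G.irrefl (h ▸ hadj)
  have humem : u ∈ G.neighborFinset v := by rwa [SimpleGraph.mem_neighborFinset]
  have hruJ : r u ∈ Set.Ioc (bP Δ j) 1 := by
    have := hr u; unfold SEv at this; rwa [if_neg hnev, if_pos humem] at this
  have hrvJ' : r v ∈ Set.Ioc (bP Δ j') 1 := hnb v hadj.symm
  have h1 : j' ≤ j := by
    by_contra h
    push_neg at h
    have hb := bP_mono hΔ (show j + 1 ≤ j' by omega)
    have := hrvJ'.1
    have := hrv.2
    linarith
  have h2 : j ≤ j' := by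
    by_contra h
    push_neg at h
    have hb := bP_mono hΔ (show j' + 1 ≤ j by omega)
    have := hruJ.1
    have := hru'.2
    linarith
  have hjj : j' = j := le_antisymm h1 h2
  subst hjj
  rw [Bv, Set.mem_univ_pi]
  intro w
  unfold SBv
  by_cases hw : w = v ∨ w = u
  · rw [if_pos hw]
    rcases hw with rfl | rfl
    · exact hrv
    · exact hru'
  · rw [if_neg hw]
    push_neg at hw
    by_cases hwK : w ∈ Kf G v u
    · rw [if_pos hwK]
      rcases Finset.mem_union.mp hwK with h1 | h2
      · have hwN := (Finset.mem_sdiff.mp h1).1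
        have := hr w
        unfold SEv at this
        rwa [if_neg hw.1, if_pos hwN] at this
      · have hwN := (Finset.mem_sdiff.mp h2).1
        rw [SimpleGraph.mem_neighborFinset] at hwN
        exact hnb w hwN
    · rw [if_neg hwK]
      trivial

lemma Dv_subset_inIS (G : SimpleGraph V) [DecidableRel G.Adj] {Δ : ℕ} (hΔ : 0 < Δ) (v : V) :
    (⋃ j ∈ Finset.Icc 1 (kP Δ), Dv G Δ v j) ⊆ {r | inIS G Δ r v} := by
  intro r hr
  simp only [Set.mem_iUnion, exists_prop] at hr
  obtain ⟨j, hj, hrE, hrB⟩ := hr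
  refine ⟨Ev_subset_cand G v hj hrE, ?_⟩
  intro u hadj hcand
  apply hrB
  simp only [Set.mem_iUnion, exists_prop]
  exact ⟨u, by rwa [SimpleGraph.mem_neighborFinset], Ev_cand_mem_Bv G hΔ v hadj hrE hcand⟩

lemma Dv_pairwise (G : SimpleGraph V) [DecidableRel G.Adj] {Δ : ℕ} (hΔ0 : 0 < Δ) (v : V) :
    Set.PairwiseDisjoint ↑(Finset.Icc 1 (kP Δ)) (Dv G Δ v) := by
  have key : ∀ p q : ℕ, p < q → Disjoint (Ev G Δ v p) (Ev G Δ v q) := by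
    intro p q hpq
    rw [Set.disjoint_left]
    intro r hrp hrq
    rw [Ev, Set.mem_univ_pi] at hrp hrq
    have h1 := hrp v
    have h2 := hrq v
    unfold SEv at h1 h2
    rw [if_pos rfl] at h1 h2
    have hb := bP_mono hΔ0 (show p + 1 ≤ q by omega)
    have e1 := h1.2
    have e2 := h2.1
    linarith
  intro p hp q hq hne
  rcases lt_or_gt_of_ne hne with h | h
  · exact Disjoint.mono Set.diff_subset Set.diff_subset (key p q h)
  · exact Disjoint.mono Set.diff_subset Set.diff_subset (key q p h).symm

lemma Dv_lower (G : SimpleGraph V) [DecidableRel G.Adj] {Δ : ℕ} (hΔ0 : 0 < Δ)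
    (hreg : G.IsRegularOfDegree Δ) (htri : G.CliqueFree 3) (v : V) {j : ℕ}
    (hj : j ∈ Finset.Icc 1 (kP Δ)) (hmaster : 1000 * aRec (kP Δ) ^ 2 ≤ (Δ:ℝ)) :
    ENNReal.ofReal (1 / (100 * (Δ:ℝ))) ≤ rankMeasure V (Dv G Δ v j) := by
  obtain ⟨hj1, hjk⟩ := Finset.mem_Icc.mp hj
  have hD : (0:ℝ) < (Δ:ℝ) := by exact_mod_cast hΔ0
  obtain ⟨m, rfl⟩ : ∃ m, j = m + 1 := ⟨j - 1, by omega⟩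
  have hsmallj : 1000 * aRec (m + 1) ^ 2 ≤ (Δ:ℝ) := by
    have h1 : aRec (m + 1) ≤ aRec (kP Δ) := aRec_strictMono.monotone hjk
    have h2 := five_le_aRec (m + 1)
    have h3 := five_le_aRec (kP Δ)
    nlinarith
  have hbPj : bP Δ (m + 1) = aRec m / (Δ:ℝ) := by
    unfold bP aP; norm_num
  have hbPj1 : bP Δ (m + 1 + 1) = aRec (m + 1) / (Δ:ℝ) := by
    unfold bP aP; norm_num
  have hkey := keyIneq Δ (by omega) (aRec m) (aRec (m + 1)) (five_le_aRec m)
    (by simp [aRec]) hsmallj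
  rw [← hbPj, ← hbPj1] at hkey
  -- basic bounds on the b's
  have hb0 : 0 ≤ bP Δ (m + 1) := by
    rw [hbPj]
    have := five_le_aRec m
    positivity
  have hb1 : bP Δ (m + 1 + 1) ≤ 1 := by
    rw [hbPj1, div_le_one hD]
    have := five_le_aRec (m + 1)
    nlinarith
  have hbb : bP Δ (m + 1) ≤ bP Δ (m + 1 + 1) := bP_mono hΔ0 (by omega)
  have h1mb : 0 ≤ 1 - bP Δ (m + 1) := by linarith
  have hsub0 : 0 ≤ bP Δ (m + 1 + 1) - bP Δ (m + 1) := by linarith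
  -- measure of Ev
  have hmuE : rankMeasure V (Ev G Δ v (m + 1)) =
      ENNReal.ofReal ((bP Δ (m + 1 + 1) - bP Δ (m + 1)) * (1 - bP Δ (m + 1)) ^ Δ) := by
    rw [mu_Ev G v hreg hb0 hb1, ENNReal.ofReal_mul hsub0, ENNReal.ofReal_pow h1mb]
  -- measure of the union of bad events
  have hBsum : rankMeasure V (⋃ u ∈ G.neighborFinset v, Bv G Δ v u (m + 1)) ≤
      ENNReal.ofReal ((Δ:ℝ) * (bP Δ (m + 1 + 1) - bP Δ (m + 1)) ^ 2 *
        (1 - bP Δ (m + 1)) ^ (2 * (Δ - 1))) := by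
    refine le_trans (measure_biUnion_finset_le _ _) ?_
    have heach : ∀ u ∈ G.neighborFinset v, rankMeasure V (Bv G Δ v u (m + 1)) =
        ENNReal.ofReal (bP Δ (m + 1 + 1) - bP Δ (m + 1)) ^ 2 *
          ENNReal.ofReal (1 - bP Δ (m + 1)) ^ (2 * (Δ - 1)) := by
      intro u hu
      rw [SimpleGraph.mem_neighborFinset] at hu
      exact mu_Bv G hreg htri hu hb0 hb1
    rw [Finset.sum_congr rfl heach, Finset.sum_const,
      SimpleGraph.card_neighborFinset_eq_degree, hreg v, nsmul_eq_mul]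
    rw [ENNReal.ofReal_mul (by positivity), ENNReal.ofReal_mul (by positivity),
      ENNReal.ofReal_pow hsub0, ENNReal.ofReal_pow h1mb, ENNReal.ofReal_natCast]
    exact le_of_eq (mul_assoc _ _ _).symm
  -- decomposition
  have hsplit : Ev G Δ v (m + 1) ⊆
      Dv G Δ v (m + 1) ∪ ⋃ u ∈ G.neighborFinset v, Bv G Δ v u (m + 1) := by
    intro r hr
    by_cases h : r ∈ ⋃ u ∈ G.neighborFinset v, Bv G Δ v u (m + 1)
    · exact Or.inr h
    · exact Or.inl ⟨hr, h⟩
  have hEle : ENNReal.ofReal ((bP Δ (m + 1 + 1) - bP Δ (m + 1)) * (1 - bP Δ (m + 1)) ^ Δ) ≤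
      rankMeasure V (Dv G Δ v (m + 1)) +
        ENNReal.ofReal ((Δ:ℝ) * (bP Δ (m + 1 + 1) - bP Δ (m + 1)) ^ 2 *
          (1 - bP Δ (m + 1)) ^ (2 * (Δ - 1))) := by
    rw [← hmuE]
    calc rankMeasure V (Ev G Δ v (m + 1))
        ≤ rankMeasure V (Dv G Δ v (m + 1) ∪
            ⋃ u ∈ G.neighborFinset v, Bv G Δ v u (m + 1)) := measure_mono hsplit
      _ ≤ rankMeasure V (Dv G Δ v (m + 1)) +
            rankMeasure V (⋃ u ∈ G.neighborFinset v, Bv G Δ v u (m + 1)) :=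
          measure_union_le _ _
      _ ≤ _ := by exact add_le_add le_rfl hBsum
  -- conclude via cancellation
  have hDBnn : (0:ℝ) ≤ (Δ:ℝ) * (bP Δ (m + 1 + 1) - bP Δ (m + 1)) ^ 2 *
      (1 - bP Δ (m + 1)) ^ (2 * (Δ - 1)) := by positivity
  have hchain : ENNReal.ofReal (1 / (100 * (Δ:ℝ))) +
      ENNReal.ofReal ((Δ:ℝ) * (bP Δ (m + 1 + 1) - bP Δ (m + 1)) ^ 2 *
        (1 - bP Δ (m + 1)) ^ (2 * (Δ - 1))) ≤
      rankMeasure V (Dv G Δ v (m + 1)) +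
        ENNReal.ofReal ((Δ:ℝ) * (bP Δ (m + 1 + 1) - bP Δ (m + 1)) ^ 2 *
          (1 - bP Δ (m + 1)) ^ (2 * (Δ - 1))) := by
    refine le_trans ?_ hEle
    rw [← ENNReal.ofReal_add (by positivity) hDBnn]
    exact ENNReal.ofReal_le_ofReal hkey
  exact (ENNReal.add_le_add_iff_right ENNReal.ofReal_ne_top).mp hchain

end Aux

theorem stmt0 {V : Type*} [Fintype V] [DecidableEq V]
    (G : SimpleGraph V) [DecidableRel G.Adj] (Δ : ℕ) (hΔ : 1000 < Δ)
    (hreg : G.IsRegularOfDegree Δ) (htri : G.CliqueFree 3)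
    (v : V) (i : ℕ) (hi : i ∈ Finset.Icc 1 (kP Δ)) :
    ENNReal.ofReal ((logStar Δ : ℝ) / (10 ^ 4 * Δ)) ≤
      rankMeasure V {r | inIS G Δ r v} := by
  classical
  obtain ⟨hi1, hik⟩ := Finset.mem_Icc.mp hi
  have hk1 : 1 ≤ kP Δ := le_trans hi1 hik
  have hΔ0 : 0 < Δ := by omega
  have hD : (0:ℝ) < (Δ:ℝ) := by exact_mod_cast hΔ0
  have hkdef : kP Δ = logStar (Δ:ℝ) / 10 := rfl
  have hiter : ∀ j ≤ 10 * kP Δ - 1, 1 < Real.log^[j] (Δ:ℝ) := by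
    intro j hj
    exact logStar_gt (by omega)
  have hTΔ : Tow (10 * kP Δ - 1) < (Δ:ℝ) := Tow_lt_of_iter _ _ hD hiter
  have hmaster : 1000 * aRec (kP Δ) ^ 2 ≤ (Δ:ℝ) := by
    have h0 : 0 ≤ aRec (kP Δ) := by linarith [five_le_aRec (kP Δ)]
    have h1 : aRec (kP Δ) ^ 2 ≤ Tow (kP Δ + 2) ^ 2 :=
      pow_le_pow_left₀ h0 (aRec_le_Tow _) 2
    have h2 := Tow_sq (kP Δ + 2)
    have h3 := thousand_Tow (kP Δ)
    have h4 : Tow (kP Δ + 6) ≤ Tow (10 * kP Δ - 1) := Tow_mono (by omega)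
    linarith
  have hmeas : ∀ j ∈ Finset.Icc 1 (kP Δ), MeasurableSet (Dv G Δ v j) :=
    fun j _ => Dv_measurable G Δ v j
  have hsum := measure_biUnion_finset (μ := rankMeasure V) (Dv_pairwise G hΔ0 v) hmeas
  have hlow : ∀ j ∈ Finset.Icc 1 (kP Δ),
      ENNReal.ofReal (1 / (100 * (Δ:ℝ))) ≤ rankMeasure V (Dv G Δ v j) :=
    fun j hj => Dv_lower G hΔ0 hreg htri v hj hmaster
  calc ENNReal.ofReal ((logStar (Δ:ℝ) : ℝ) / (10 ^ 4 * (Δ:ℝ)))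
      ≤ ENNReal.ofReal ((kP Δ : ℝ) * (1 / (100 * (Δ:ℝ)))) := by
        apply ENNReal.ofReal_le_ofReal
        have hcast : (logStar (Δ:ℝ) : ℝ) ≤ 100 * (kP Δ : ℝ) := by
          have h : logStar (Δ:ℝ) ≤ 100 * kP Δ := by omega
          exact_mod_cast h
        rw [div_le_iff₀ (by positivity)]
        have heq : (kP Δ : ℝ) * (1 / (100 * (Δ:ℝ))) * (10 ^ 4 * (Δ:ℝ)) =
            100 * (kP Δ : ℝ) := by
          field_simp
          ring
        rw [heq]
        exact hcast
    _ = ENNReal.ofReal ((kP Δ : ℝ)) * ENNReal.ofReal (1 / (100 * (Δ:ℝ))) :=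
        ENNReal.ofReal_mul (by positivity)
    _ = (kP Δ : ℝ≥0∞) * ENNReal.ofReal (1 / (100 * (Δ:ℝ))) := by
        rw [ENNReal.ofReal_natCast]
    _ = ∑ _j ∈ Finset.Icc 1 (kP Δ), ENNReal.ofReal (1 / (100 * (Δ:ℝ))) := by
        rw [Finset.sum_const, Nat.card_Icc, nsmul_eq_mul]
        norm_num
    _ ≤ ∑ j ∈ Finset.Icc 1 (kP Δ), rankMeasure V (Dv G Δ v j) :=
        Finset.sum_le_sum hlow
    _ = rankMeasure V (⋃ j ∈ Finset.Icc 1 (kP Δ), Dv G Δ v j) := hsum.symm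
    _ ≤ rankMeasure V {r | inIS G Δ r v} := measure_mono (Dv_subset_inIS G hΔ0 v)
end

section
/- For every vertex v of G and every i ∈ {1,…,k}, Pr[v ∈ C_i] ≥ 1/(2·e⁴·Δ). -/
open MeasureTheory Real
open scoped ENNReal

-- numeric helpers
lemma exp_two_gt : (7:ℝ) < Real.exp 2 := by
  have h := Real.exp_one_gt_d9
  have h2 : Real.exp 2 = Real.exp 1 * Real.exp 1 := by rw [← Real.exp_add]; norm_num
  nlinarith

lemma exp_ge_self_aux {a : ℝ} (ha : 5 ≤ a) : a ≤ Real.exp (a - 3) := by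
  have h1 : Real.exp (a - 3) = Real.exp 2 * Real.exp (a - 5) := by
    rw [← Real.exp_add]; ring_nf
  have h2 : a - 5 + 1 ≤ Real.exp (a - 5) := Real.add_one_le_exp _
  have h3 := exp_two_gt
  nlinarith [Real.exp_pos (a - 5)]

lemma aRec_ge_five : ∀ n, (5:ℝ) ≤ aRec n := by
  intro n
  induction n with
  | zero => simp [aRec]
  | succ n ih =>
      have := exp_ge_self_aux ih
      simpa [aRec] using le_trans ih this

lemma aRec_mono : Monotone aRec := by
  apply monotone_nat_of_le_succ
  intro n
  simpa [aRec] using exp_ge_self_aux (aRec_ge_five n)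

lemma aRec_le_iter : ∀ n, aRec n ≤ Real.exp^[n] 5 := by
  intro n
  induction n with
  | zero => simp [aRec]
  | succ n ih =>
      rw [Function.iterate_succ_apply']
      calc aRec (n+1) = Real.exp (aRec n - 3) := rfl
        _ ≤ Real.exp (aRec n) := Real.exp_le_exp.mpr (by linarith)
        _ ≤ Real.exp (Real.exp^[n] 5) := Real.exp_le_exp.mpr ih

lemma one_le_iter_exp (m : ℕ) : (1:ℝ) ≤ Real.exp^[m] 1 := by
  induction m with
  | zero => simp
  | succ m ih =>
      rw [Function.iterate_succ_apply']
      linarith [Real.add_one_le_exp (Real.exp^[m] 1)]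

lemma iter_exp_lt : ∀ (m : ℕ) (x : ℝ), (∀ j ≤ m, 1 < Real.log^[j] x) → Real.exp^[m] 1 < x := by
  intro m
  induction m with
  | zero => intro x h; simpa using h 0 (le_refl 0)
  | succ m ih =>
      intro x h
      have hx1 : 1 < x := by simpa using h 0 (Nat.zero_le _)
      have hlog : Real.exp^[m] 1 < Real.log x := by
        apply ih
        intro j hj
        have := h (j+1) (by omega)
        rwa [Function.iterate_succ_apply] at this
      rw [Function.iterate_succ_apply']
      calc Real.exp (Real.exp^[m] 1) < Real.exp (Real.log x) := Real.exp_lt_exp.mpr hlog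
        _ = x := Real.exp_log (by linarith)

lemma ae_le {a : ℝ} (ha : 5 ≤ a) : a * Real.exp (-a) ≤ 5 * Real.exp (-5) := by
  have h : Real.exp (-a) = Real.exp (-5) * Real.exp (5 - a) := by rw [← Real.exp_add]; ring_nf
  have hmul : Real.exp (5-a) * Real.exp (a-5) = 1 := by rw [← Real.exp_add]; norm_num
  have hkey : a * Real.exp (5-a) ≤ 5 := by
    have h1 : a - 4 ≤ Real.exp (a-5) := by linarith [Real.add_one_le_exp (a-5)]
    have h2 : 0 ≤ 5*Real.exp (a-5) - a := by nlinarith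
    nlinarith [Real.exp_pos (5-a), mul_nonneg (Real.exp_pos (5-a)).le h2]
  rw [h]
  calc a * (Real.exp (-5) * Real.exp (5-a)) = (a * Real.exp (5-a)) * Real.exp (-5) := by ring
    _ ≤ 5 * Real.exp (-5) := by nlinarith [Real.exp_pos (-5:ℝ), (Real.exp_pos (-5:ℝ)).le]

lemma exp5_ge : (148:ℝ) ≤ Real.exp 5 := by
  have h := Real.exp_one_gt_d9
  have h5 : Real.exp 5 = (Real.exp 1)^5 := by
    rw [← Real.exp_nat_mul]; norm_num
  have : (2.7182818283:ℝ)^5 ≤ (Real.exp 1)^5 := pow_le_pow_left₀ (by norm_num) h.le 5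
  rw [h5]; nlinarith [this]

lemma three_sq_le_exp {a : ℝ} (ha : 5 ≤ a) : 3*a^2 ≤ Real.exp a := by
  have h1 : Real.exp a = Real.exp 5 * Real.exp (a-5) := by rw [← Real.exp_add]; ring_nf
  have h2 : (a-5)/3 + 1 ≤ Real.exp ((a-5)/3) := Real.add_one_le_exp _
  have h3 : Real.exp (a-5) = (Real.exp ((a-5)/3))^3 := by rw [← Real.exp_nat_mul]; ring_nf
  have h4 : ((a-5)/3 + 1)^3 ≤ (Real.exp ((a-5)/3))^3 :=
    pow_le_pow_left₀ (by linarith) h2 3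
  have h5 := exp5_ge
  have h6 : ((a-5)/3+1)^3 ≤ Real.exp (a-5) := by rw [h3]; exact h4
  have h7 : 148 * (((a-5)/3+1)^3) ≤ Real.exp 5 * Real.exp (a-5) :=
    mul_le_mul h5 h6 (pow_nonneg (by linarith) 3) (Real.exp_pos 5).le
  have h8 : 3*a^2 ≤ 148*(((a-5)/3+1)^3) := by
    nlinarith [sq_nonneg (a-5), pow_nonneg (show (0:ℝ) ≤ a-5 by linarith) 3]
  linarith [h7, h8, h1.ge, h1.le]

lemma numeric_key : Real.exp (1/2 : ℝ) ≤ 2*Real.exp 1 - 10/Real.exp 1 := by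
  have hE1 := Real.exp_one_gt_d9
  have hE2 := Real.exp_one_lt_d9
  set E := Real.exp 1 with hE
  set c := Real.exp (1/2 : ℝ) with hc
  have hc0 : (0:ℝ) < c := Real.exp_pos _
  have hE0 : (0:ℝ) < E := Real.exp_pos _
  have hc2 : c * c = E := by rw [hc, hE, ← Real.exp_add]; norm_num
  have hv : (0:ℝ) < 2*E^2 - 10 := by nlinarith
  have hce : (c*E)^2 = E^3 := by
    calc (c*E)^2 = (c*c)*E^2 := by ring
      _ = E^3 := by rw [hc2]; ring
  have hsq : (c*E)^2 ≤ (2*E^2 - 10)^2 := by rw [hce]; nlinarith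
  have h4 : c*E ≤ 2*E^2 - 10 := by
    nlinarith [hsq, hv, mul_pos hc0 hE0]
  have heq : (2*E - 10/E) = (2*E^2-10)/E := by field_simp
  rw [heq, le_div_iff₀ hE0]
  linarith [h4]


lemma step4 {a : ℝ} (ha : 5 ≤ a) :
    1/(2*Real.exp 4) ≤ (Real.exp (a-3) - a) * Real.exp (-(a+1/2)) := by
  have hstar : Real.exp (1/2:ℝ) ≤ 2*Real.exp 4*(Real.exp (-3:ℝ) - 5*Real.exp (-5:ℝ)) := by
    have h1 : Real.exp 4 * Real.exp (-3:ℝ) = Real.exp 1 := by rw [← Real.exp_add]; norm_num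
    have h2 : Real.exp 4 * Real.exp (-5:ℝ) = Real.exp (-1:ℝ) := by rw [← Real.exp_add]; norm_num
    have h3 : Real.exp (-1:ℝ) * Real.exp 1 = 1 := by rw [← Real.exp_add]; norm_num
    have h4 : Real.exp (-1:ℝ) = 1/Real.exp 1 := by
      rw [Real.exp_neg]; rw [one_div]
    have hnk := numeric_key
    rw [h4] at h2
    have heq : 2*Real.exp 4*(Real.exp (-3:ℝ) - 5*Real.exp (-5:ℝ)) = 2*Real.exp 1 - 10/Real.exp 1 := by
      linear_combination 2*h1 - 10*h2
    rw [heq]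
    exact hnk
  have e1 : Real.exp (a-3) * Real.exp (-(a+1/2)) = Real.exp (-3:ℝ) * Real.exp (-(1/2:ℝ)) := by
    rw [← Real.exp_add, ← Real.exp_add]; ring_nf
  have e2 : a * Real.exp (-(a+1/2)) = (a * Real.exp (-a)) * Real.exp (-(1/2:ℝ)) := by
    rw [mul_assoc, ← Real.exp_add]; ring_nf
  have e3 : Real.exp (1/2:ℝ) * Real.exp (-(1/2:ℝ)) = 1 := by rw [← Real.exp_add]; norm_num
  have hae := ae_le ha
  have hp := Real.exp_pos (-(1/2:ℝ))
  have hp4 := Real.exp_pos (4:ℝ)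
  have key : (Real.exp (-3:ℝ) - 5*Real.exp (-5:ℝ)) * Real.exp (-(1/2:ℝ)) ≥ 1/(2*Real.exp 4) := by
    rw [ge_iff_le, div_le_iff₀ (by positivity)]
    nlinarith [hstar, e3, hp.le, hp4.le]
  have expand : (Real.exp (a-3) - a) * Real.exp (-(a+1/2))
      = Real.exp (-3:ℝ) * Real.exp (-(1/2:ℝ)) - (a*Real.exp (-a)) * Real.exp (-(1/2:ℝ)) := by
    rw [sub_mul, e1, e2]
  rw [expand]
  nlinarith [key, hae, hp.le]

lemma pow_ge {x : ℝ} (h0 : 0 ≤ x) (h1 : x < 1) (n : ℕ) :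
    Real.exp (-((n:ℝ) * (x/(1-x)))) ≤ (1-x)^n := by
  have h2 : (0:ℝ) < 1 - x := by linarith
  have key : Real.exp (-(x/(1-x))) ≤ 1-x := by
    have h3 : x/(1-x) + 1 ≤ Real.exp (x/(1-x)) := Real.add_one_le_exp _
    have h4 : x/(1-x) + 1 = 1/(1-x) := by field_simp; ring
    have h5 : 1/(1-x) ≤ Real.exp (x/(1-x)) := by rw [← h4]; exact h3
    rw [Real.exp_neg]
    calc (Real.exp (x/(1-x)))⁻¹ ≤ (1/(1-x))⁻¹ := by
          gcongr
      _ = 1-x := by simp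
  calc Real.exp (-((n:ℝ)*(x/(1-x)))) = (Real.exp (-(x/(1-x))))^n := by
        rw [← Real.exp_nat_mul]; ring_nf
    _ ≤ (1-x)^n := pow_le_pow_left₀ (Real.exp_pos _).le key n

lemma main_real (Δ : ℕ) (a : ℝ) (ha : 5 ≤ a) (hD : 3*a^2 ≤ (Δ:ℝ)) :
    1/(2*Real.exp 4 * Δ) ≤ (Real.exp (a-3) - a)/(Δ:ℝ) * (1 - a/Δ)^Δ := by
  have hD0 : (0:ℝ) < (Δ:ℝ) := by nlinarith
  have haD : a < (Δ:ℝ) := by nlinarith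
  have hx0 : 0 ≤ a/(Δ:ℝ) := by positivity
  have hx1 : a/(Δ:ℝ) < 1 := (div_lt_one hD0).mpr haD
  have hDa : 0 < (Δ:ℝ) - a := by linarith
  have hp := pow_ge hx0 hx1 Δ
  have he : (Δ:ℝ) * ((a/(Δ:ℝ))/(1-a/(Δ:ℝ))) = a*(Δ:ℝ)/((Δ:ℝ)-a) := by
    field_simp
  have hε : a*(Δ:ℝ)/((Δ:ℝ)-a) ≤ a + 1/2 := by
    rw [div_le_iff₀ hDa]; nlinarith
  have hp2 : Real.exp (-(a+1/2)) ≤ (1-a/(Δ:ℝ))^Δ := by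
    refine le_trans (Real.exp_le_exp.mpr ?_) hp
    rw [he]
    linarith
  have h4 := step4 ha
  have hpos : 0 ≤ Real.exp (a-3) - a := by linarith [exp_ge_self_aux ha]
  have hpe : 0 < Real.exp 4 := Real.exp_pos _
  calc 1/(2*Real.exp 4*(Δ:ℝ)) = (1/(2*Real.exp 4))/(Δ:ℝ) := by ring
    _ ≤ ((Real.exp (a-3) - a)*Real.exp (-(a+1/2)))/(Δ:ℝ) := by gcongr
    _ = (Real.exp (a-3) - a)/(Δ:ℝ) * Real.exp (-(a+1/2)) := by ring
    _ ≤ (Real.exp (a-3)-a)/(Δ:ℝ) * (1-a/(Δ:ℝ))^Δ := by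
        gcongr

theorem stmt1 {V : Type*} [Fintype V] [DecidableEq V]
    (G : SimpleGraph V) [DecidableRel G.Adj] (Δ : ℕ) (hΔ : 1000 < Δ)
    (hreg : G.IsRegularOfDegree Δ) (htri : G.CliqueFree 3)
    (v : V) (i : ℕ) (hi : i ∈ Finset.Icc 1 (kP Δ)) :
    ENNReal.ofReal (1 / (2 * Real.exp 4 * Δ)) ≤
      rankMeasure V {r | isCandAt G Δ r i v} := by
  classical
  obtain ⟨hi1, hik⟩ := Finset.mem_Icc.mp hi
  have hk1 : 1 ≤ kP Δ := le_trans hi1 hik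
  have h10 : 10 * kP Δ ≤ logStar (Δ:ℝ) := by
    have := Nat.div_mul_le_self (logStar (Δ:ℝ)) 10
    unfold kP at *
    omega
  set k := kP Δ with hkdef
  have hlt : ∀ j ≤ k + 3, 1 < Real.log^[j] (Δ:ℝ) := by
    intro j hj
    have hjlt : j < logStar (Δ:ℝ) := by omega
    have hnot : j ∉ {n : ℕ | Real.log^[n] (Δ:ℝ) ≤ 1} := Nat.notMem_of_lt_sInf hjlt
    simpa using lt_of_not_ge (by simpa using hnot)
  have hbig : Real.exp^[k+3] 1 < (Δ:ℝ) := iter_exp_lt _ _ hlt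
  have h2it : Real.exp^[2] (1:ℝ) = Real.exp (Real.exp 1) := by
    rw [show (2:ℕ) = 1 + 1 from rfl, Function.iterate_succ_apply', Function.iterate_one]
  have h52 : (5:ℝ) ≤ Real.exp^[2] 1 := by
    rw [h2it]
    have h1 : Real.exp 2 ≤ Real.exp (Real.exp 1) :=
      Real.exp_le_exp.mpr (by linarith [Real.exp_one_gt_d9])
    linarith [exp_two_gt]
  have hchain : Real.exp (aRec k) < (Δ:ℝ) := by
    have e1 : aRec k ≤ Real.exp^[k] 5 := aRec_le_iter k
    have e2 : Real.exp^[k] 5 ≤ Real.exp^[k] (Real.exp^[2] 1) :=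
      (Real.exp_monotone.iterate k) h52
    have e3 : Real.exp^[k] (Real.exp^[2] 1) = Real.exp^[k+2] 1 :=
      (Function.iterate_add_apply _ k 2 1).symm
    have e4 : Real.exp^[k+3] (1:ℝ) = Real.exp (Real.exp^[k+2] 1) := by
      rw [show k+3 = (k+2)+1 from rfl, Function.iterate_succ_apply']
    calc Real.exp (aRec k) ≤ Real.exp (Real.exp^[k+2] 1) := by
          apply Real.exp_le_exp.mpr
          rw [← e3]; exact le_trans e1 e2
      _ = Real.exp^[k+3] 1 := e4.symm
      _ < (Δ:ℝ) := hbig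
  set a := aP i with hadef
  have ha5 : (5:ℝ) ≤ a := aRec_ge_five _
  have hik' : i - 1 ≤ k := by omega
  have hmono : a ≤ aRec k := aRec_mono hik'
  have hmono2 : aRec i ≤ aRec k := aRec_mono hik
  have hai : aP (i+1) = Real.exp (a - 3) := by
    rw [hadef]
    unfold aP
    rw [show i + 1 - 1 = (i-1) + 1 by omega]
    rfl
  have hΔpos : (0:ℝ) < (Δ:ℝ) := by
    have : 0 < Δ := by omega
    exact_mod_cast this
  have hD : 3*a^2 ≤ (Δ:ℝ) := by
    have t1 := three_sq_le_exp ha5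
    have t2 : Real.exp a ≤ Real.exp (aRec k) := Real.exp_le_exp.mpr hmono
    linarith [hchain]
  have hb'le1 : Real.exp (a - 3) ≤ (Δ:ℝ) := by
    have : aRec i = Real.exp (a - 3) := by rw [← hai]; unfold aP; simp
    rw [← this]
    have := Real.add_one_le_exp (aRec k)
    linarith [hmono2, hchain]
  -- measure computation
  set μ : Measure ℝ := (volume : Measure ℝ).restrict (Set.Icc 0 1) with hμ
  set b := bP Δ i with hb
  set b' := bP Δ (i+1) with hb'
  have hbval : b = a / (Δ:ℝ) := rfl
  have hb'val : b' = Real.exp (a-3) / (Δ:ℝ) := by rw [hb', bP, hai]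
  have hb0 : (0:ℝ) ≤ b := by rw [hbval]; positivity
  have hbb' : b ≤ b' := by
    rw [hbval, hb'val]
    gcongr
    exact exp_ge_self_aux ha5
  have hb'1 : b' ≤ 1 := by
    rw [hb'val, div_le_one hΔpos]; exact hb'le1
  have hblt1 : b < 1 := by
    have : a < (Δ:ℝ) := by nlinarith
    rw [hbval, div_lt_one hΔpos]; exact this
  set s : V → Set ℝ := fun x => if x = v then Set.Ioc b b'
      else if x ∈ G.neighborFinset v then Set.Ioc b 1 else Set.univ with hsdef
  have hsub : Set.univ.pi s ⊆ {r | isCandAt G Δ r i v} := by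
    intro r hr
    have hv : r v ∈ Set.Ioc b b' := by
      have := hr v (Set.mem_univ v)
      simpa [hsdef] using this
    have hu : ∀ u, G.Adj v u → r u ∈ Set.Ioc b 1 := by
      intro u hadj
      have hne : u ≠ v := fun h => G.irrefl (h ▸ hadj)
      have hmem : u ∈ G.neighborFinset v := (SimpleGraph.mem_neighborFinset G v u).mpr hadj
      have := hr u (Set.mem_univ u)
      simpa [hsdef, hne, hmem, hadj] using this
    exact ⟨⟨i, hi, hv, hu⟩, hv⟩
  have hμv : μ (Set.Ioc b b') = ENNReal.ofReal (b' - b) := by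
    rw [hμ, Measure.restrict_apply measurableSet_Ioc]
    rw [Set.inter_eq_left.mpr (fun x hx => Set.mem_Icc.mpr ⟨le_trans hb0 hx.1.le, le_trans hx.2 hb'1⟩)]
    exact Real.volume_Ioc
  have hμu : μ (Set.Ioc b 1) = ENNReal.ofReal (1 - b) := by
    rw [hμ, Measure.restrict_apply measurableSet_Ioc]
    rw [Set.inter_eq_left.mpr (fun x hx => Set.mem_Icc.mpr ⟨le_trans hb0 hx.1.le, hx.2⟩)]
    exact Real.volume_Ioc
  have hμuniv : μ Set.univ = 1 := by
    rw [hμ, Measure.restrict_apply MeasurableSet.univ, Set.univ_inter, Real.volume_Icc]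
    norm_num
  have hvN : v ∉ G.neighborFinset v := by simp
  have hprod : ∏ x : V, μ (s x) = ENNReal.ofReal (b'-b) * ENNReal.ofReal (1-b) ^ Δ := by
    have hout : ∀ x ∈ Finset.univ, x ∉ insert v (G.neighborFinset v) → μ (s x) = 1 := by
      intro x _ hx
      rw [Finset.mem_insert] at hx
      push_neg at hx
      rw [hsdef]
      simp only [if_neg hx.1, if_neg hx.2]
      exact hμuniv
    rw [← Finset.prod_subset (Finset.subset_univ (insert v (G.neighborFinset v))) hout]
    rw [Finset.prod_insert hvN]
    have h1 : μ (s v) = ENNReal.ofReal (b'-b) := by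
      rw [hsdef]; simp only [if_pos rfl]; exact hμv
    have h2 : ∀ u ∈ G.neighborFinset v, μ (s u) = ENNReal.ofReal (1-b) := by
      intro u hu
      have hne : u ≠ v := by rintro rfl; exact hvN hu
      rw [hsdef]; simp only [if_neg hne, if_pos hu]; exact hμu
    rw [Finset.prod_congr rfl h2, Finset.prod_const, h1,
      SimpleGraph.card_neighborFinset_eq_degree, hreg v]
  have hreal : 1/(2*Real.exp 4*(Δ:ℝ)) ≤ (b'-b)*(1-b)^Δ := by
    have hmr := main_real Δ a ha5 hD
    rw [hb'val, hbval, div_sub_div_same]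
    exact hmr
  calc ENNReal.ofReal (1 / (2 * Real.exp 4 * Δ))
      ≤ ENNReal.ofReal ((b'-b)*(1-b)^Δ) := ENNReal.ofReal_le_ofReal hreal
    _ = ENNReal.ofReal (b'-b) * ENNReal.ofReal (1-b) ^ Δ := by
        rw [ENNReal.ofReal_mul (by linarith), ENNReal.ofReal_pow (by linarith)]
    _ = ∏ x : V, μ (s x) := hprod.symm
    _ = rankMeasure V (Set.univ.pi s) := by
        simp only [rankMeasure, hμ]
        rw [Measure.pi_pi]
    _ ≤ rankMeasure V {r | isCandAt G Δ r i v} := measure_mono hsub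
end
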